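/- arXiv:0809.3818 — 6 statements merged into one kernel-verified Lean document; each statement's English description precedes it below -/
import Mathlib

section
/- Let c₀ ∈ ℝ, ε > 0, and let f be a twice continuously differentiable real function on [c₀ − ε, c₀] such that f(c₀) = 1 or f(c₀) = −1, and |f(r)| < 1 for all r ∈ [c₀ − ε, c₀). Then the function r ↦ f(r)/√(1 − f(r)²) is integrable on [c₀ − ε, c₀) (i.e. the improper integral ∫_{c₀−ε}^{c₀} f(r)/√(1 − f(r)²) dr is finite) if and only if f'(c₀) ≠ 0. -/
/-!
Put `g = 1 - f²`, so that `g (c₀) = 0`, `g > 0` on `[c₀ - ε, c₀)` and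
`g'(c₀) = -2 f(c₀) f'(c₀)` vanishes exactly when `f'(c₀)` does. The integrand is continuous on
`[c₀ - ε, c₀)`, so only its behaviour as `r → c₀⁻` matters, and there it is comparable to
`1 / √g` because `f → ±1`. If `g'(c₀) ≠ 0`, then `c₀ - r = O(g r)` and the integrand is
`O((c₀ - r)^(-1/2))`, which is integrable. If `g'(c₀) = 0`, Taylor's theorem gives
`g r = O((c₀ - r)²)`, so `(c₀ - r)⁻¹` is `O` of the integrand and cannot be integrable.
-/

open Set MeasureTheory Filter Topology Asymptotics

theorem HasDerivWithinAt.isBigO_sub_rev {𝕜 F : Type*} [NontriviallyNormedField 𝕜]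
    [NormedAddCommGroup F] [NormedSpace 𝕜 F] {g : 𝕜 → F} {g' : F} {s : Set 𝕜} {x : 𝕜}
    (hg : HasDerivWithinAt g g' s x) (hg' : g' ≠ 0) :
    (· - x) =O[𝓝[s] x] (g · - g x) :=
  (HasDerivAtFilter.isTheta_sub hg hg').isBigO_symm.comp_tendsto
    (tendsto_id.prodMk tendsto_const_pure)

theorem Convex.isBigO_sub_sq_of_derivWithin_eq_zero {g : ℝ → ℝ} {s : Set ℝ} {x : ℝ}
    (hs : Convex ℝ s) (hx : x ∈ s) (hg : ContDiffOn ℝ 2 g s) (hg' : derivWithin g s x = 0) :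
    (g · - g x) =O[𝓝[s] x] (fun y => (y - x) ^ 2) := by
  have htaylor : ∀ y, taylorWithinEval g 2 s x y =
      g x + iteratedDerivWithin 2 g s x / 2 * (y - x) ^ 2 := by
    intro y
    simp only [taylor_within_apply, Finset.sum_range_succ, Finset.sum_range_zero,
      iteratedDerivWithin_zero, iteratedDerivWithin_one, hg', smul_eq_mul]
    norm_num
    ring
  refine ((taylor_isLittleO hs hx hg).isBigO.add
    (isBigO_const_mul_self (iteratedDerivWithin 2 g s x / 2) _ _)).congr_left fun y => ?_
  rw [htaylor]
  ring

theorem integrableAtFilter_inv_sqrt_sub_nhdsLT (b : ℝ) :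
    IntegrableAtFilter (fun x => (√(b - x))⁻¹) (𝓝[<] b) := by
  refine ⟨Ioo (b - 1) b, Ioo_mem_nhdsLT (by linarith), ?_⟩
  have h := ((intervalIntegral.intervalIntegrable_rpow' (r := -(1 / 2)) (by norm_num)
    (a := 0) (b := 1)).comp_sub_left b).symm
  rw [sub_zero, intervalIntegrable_iff_integrableOn_Ioo_of_le (by linarith)] at h
  refine h.congr_fun (fun x hx => ?_) measurableSet_Ioo
  simp only [Real.rpow_neg (sub_pos.2 hx.2).le, Real.sqrt_eq_rpow]

theorem not_integrableAtFilter_sub_inv_nhdsLT (b : ℝ) :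
    ¬ IntegrableAtFilter (fun x => (x - b)⁻¹) (𝓝[<] b) := by
  rintro ⟨s, hs, hint⟩
  obtain ⟨c, hc, hsub⟩ := mem_nhdsLT_iff_exists_Ico_subset.1 hs
  have hcb := (intervalIntegrable_iff_integrableOn_Ico_of_le (le_of_lt hc)).2 (hint.mono_set hsub)
  exact (ne_of_lt hc) (by simpa using hcb)

theorem integrableOn_Ico_iff_integrableAtFilter_nhdsLT {E : Type*} [NormedAddCommGroup E]
    {F : ℝ → E} {a b : ℝ} (hab : a < b) (hF : ContinuousOn F (Ico a b)) :
    IntegrableOn F (Ico a b) ↔ IntegrableAtFilter F (𝓝[<] b) := by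
  refine ⟨fun h => ⟨Ico a b, Ico_mem_nhdsLT hab, h⟩, fun ⟨s, hs, hint⟩ => ?_⟩
  obtain ⟨c, hc, hsub⟩ := mem_nhdsLT_iff_exists_Ico_subset.1 (inter_mem hs (Ico_mem_nhdsLT hab))
  have hca : a ≤ c := (hsub ⟨le_rfl, hc⟩).2.1
  have hleft : IntegrableOn F (Icc a c) :=
    (hF.mono (Icc_subset_Ico_right hc)).integrableOn_compact isCompact_Icc
  refine (hleft.union (hint.mono_set fun x hx => (hsub hx).1)).mono_set fun x hx => ?_
  rcases le_or_gt x c with h | h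
  exacts [Or.inl ⟨hx.1, h⟩, Or.inr ⟨h.le, hx.2⟩]

section DivSqrt

variable {f g : ℝ → ℝ} {a b : ℝ}

theorem integrableAtFilter_div_sqrt_nhdsLT {y : ℝ} (hf : Tendsto f (𝓝[<] b) (𝓝 y))
    (hg_pos : ∀ᶠ x in 𝓝[<] b, 0 < g x) (hg : (· - b) =O[𝓝[<] b] g)
    (hm : StronglyMeasurableAtFilter (fun x => f x / √(g x)) (𝓝[<] b)) :
    IntegrableAtFilter (fun x => f x / √(g x)) (𝓝[<] b) := by
  have hsqrt : (fun x => √(b - x)) =O[𝓝[<] b] (fun x => √(g x)) := by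
    simpa using hg.neg_left.sqrt (hg_pos.mono fun x hx => hx.le)
  have hinv : (fun x => (√(g x))⁻¹) =O[𝓝[<] b] (fun x => (√(b - x))⁻¹) :=
    hsqrt.inv_rev <| eventually_mem_nhdsWithin.mono fun x hx h =>
      absurd h (Real.sqrt_ne_zero'.2 (sub_pos.2 hx))
  refine IsBigO.integrableAtFilter ?_ hm (integrableAtFilter_inv_sqrt_sub_nhdsLT b)
  simpa [div_eq_mul_inv] using hf.isBigO_one ℝ |>.mul hinv

theorem not_integrableAtFilter_div_sqrt_nhdsLT {y : ℝ} (hf : Tendsto f (𝓝[<] b) (𝓝 y))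
    (hy : y ≠ 0) (hg_pos : ∀ᶠ x in 𝓝[<] b, 0 < g x) (hg : g =O[𝓝[<] b] (fun x => (x - b) ^ 2)) :
    ¬ IntegrableAtFilter (fun x => f x / √(g x)) (𝓝[<] b) := by
  intro hint
  have hsqrt : (fun x => √(g x)) =O[𝓝[<] b] (· - b) := by
    simpa [Real.sqrt_sq_eq_abs] using hg.sqrt (Eventually.of_forall fun x => sq_nonneg (x - b))
  have hinv : (fun x => (x - b)⁻¹) =O[𝓝[<] b] (fun x => (√(g x))⁻¹) :=
    hsqrt.inv_rev <| hg_pos.mono fun x hx h => absurd h (Real.sqrt_ne_zero'.2 hx)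
  have hdiv : (fun x => (√(g x))⁻¹) =O[𝓝[<] b] (fun x => f x / √(g x)) := by
    have hprod := (hf.inv₀ hy).isBigO_one ℝ |>.mul (isBigO_refl (fun x => f x / √(g x)) (𝓝[<] b))
    refine (hprod.congr' ?_ (by simp)).trans (isBigO_refl _ _)
    filter_upwards [hf.eventually_ne hy] with x hx
    field_simp
  refine not_integrableAtFilter_sub_inv_nhdsLT b ((hinv.trans hdiv).integrableAtFilter ?_ hint)
  exact (measurable_id.sub_const b).inv.stronglyMeasurable.stronglyMeasurableAtFilter

theorem integrableOn_Ico_div_sqrt_iff (hab : a < b) (hf : ContinuousOn f (Icc a b))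
    (hfb : f b ≠ 0) (hg : ContDiffOn ℝ 2 g (Icc a b)) (hgb : g b = 0)
    (hg_pos : ∀ x ∈ Ico a b, 0 < g x) :
    IntegrableOn (fun x => f x / √(g x)) (Ico a b) ↔ derivWithin g (Icc a b) b ≠ 0 := by
  have hb : b ∈ Icc a b := right_mem_Icc.2 hab.le
  have hle : 𝓝[<] b ≤ 𝓝[Icc a b] b :=
    (nhdsWithin_Ico_eq_nhdsLT hab).symm.le.trans (nhdsWithin_mono _ Ico_subset_Icc_self)
  have hF : ContinuousOn (fun x => f x / √(g x)) (Ico a b) :=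
    (hf.mono Ico_subset_Icc_self).div (hg.continuousOn.mono Ico_subset_Icc_self).sqrt
      fun x hx => Real.sqrt_ne_zero'.2 (hg_pos x hx)
  have hf_lim : Tendsto f (𝓝[<] b) (𝓝 (f b)) := (hf b hb).tendsto.mono_left hle
  have hg_pos' : ∀ᶠ x in 𝓝[<] b, 0 < g x := eventually_of_mem (Ico_mem_nhdsLT hab) hg_pos
  rw [integrableOn_Ico_iff_integrableAtFilter_nhdsLT hab hF]
  refine ⟨fun hint hg' => ?_, fun hg' => ?_⟩
  · have hg_sq := (convex_Icc a b).isBigO_sub_sq_of_derivWithin_eq_zero hb hg hg'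
    exact not_integrableAtFilter_div_sqrt_nhdsLT hf_lim hfb hg_pos'
      (by simpa only [hgb, sub_zero] using hg_sq.mono hle) hint
  · have hg_lin :=
      ((hg.differentiableOn two_ne_zero) b hb).hasDerivWithinAt.isBigO_sub_rev hg'
    refine integrableAtFilter_div_sqrt_nhdsLT hf_lim hg_pos'
      (by simpa only [hgb, sub_zero] using hg_lin.mono hle) ?_
    rw [← nhdsWithin_Ico_eq_nhdsLT hab]
    exact hF.stronglyMeasurableAtFilter_nhdsWithin measurableSet_Ico b

end DivSqrt

/-- Lemma (paper, Section 4): for `f ∈ C²[c₀-ε, c₀]` with `f(c₀) = ±1` and `|f| < 1`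
on `[c₀-ε, c₀)`, the improper integral `∫ f/√(1-f²)` over `[c₀-ε, c₀)` is finite
iff `f'(c₀) ≠ 0`. -/
theorem stmt_0 (c₀ ε : ℝ) (hε : 0 < ε) (f : ℝ → ℝ)
    (hf : ContDiffOn ℝ 2 f (Icc (c₀ - ε) c₀))
    (hfc : f c₀ = 1 ∨ f c₀ = -1)
    (hflt : ∀ r ∈ Ico (c₀ - ε) c₀, |f r| < 1) :
    IntegrableOn (fun r => f r / Real.sqrt (1 - f r ^ 2)) (Ico (c₀ - ε) c₀) ↔
      derivWithin f (Icc (c₀ - ε) c₀) c₀ ≠ 0 := by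
  have hlt : c₀ - ε < c₀ := by linarith
  have hc₀ : c₀ ∈ Icc (c₀ - ε) c₀ := right_mem_Icc.2 hlt.le
  have hfc_ne : f c₀ ≠ 0 := by rcases hfc with h | h <;> simp [h]
  have hderiv : derivWithin (fun r => 1 - f r ^ 2) (Icc (c₀ - ε) c₀) c₀ =
      -(2 * f c₀ * derivWithin f (Icc (c₀ - ε) c₀) c₀) := by
    have hg_deriv := (((hf.differentiableOn two_ne_zero) c₀ hc₀).hasDerivWithinAt.pow 2).const_sub 1
    simpa using hg_deriv.derivWithin (uniqueDiffOn_Icc hlt c₀ hc₀)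
  rw [integrableOn_Ico_div_sqrt_iff hlt hf.continuousOn hfc_ne (contDiffOn_const.sub (hf.pow 2))
    (by rcases hfc with h | h <;> simp [h])
    (fun r hr => by simpa [sq_lt_one_iff_abs_lt_one] using hflt r hr), hderiv]
  simp [hfc_ne]
end

section
/- Let a > 0, b ≥ 0, c > 0, u₀ ∈ ℝ, and let u be an axisymmetric stationary rotating profile on [0, c] with u(0) = u₀, i.e. u is differentiable on [0, c] and u'(r)/√(1 + u'(r)²) = r(a r² + 2b)/4 for all r ∈ [0, c]. Then u'(c) > 0, and setting R = c √(1 + u'(c)²)/u'(c) and y(r) = R + u₀ − √(R² − r²), one has u(r) < y(r) for all r with 0 < r ≤ c. -/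
/-!
Write `φ(s) = s / √(1 + s²)` (the sine of the inclination angle of a graph with slope `s`),
which is strictly increasing and takes values in `(-1, 1)`. The equation says
`φ(u') = T(r) := r (a r² + 2b) / 4`, and the circle of radius `R` has `φ(y'(r)) = r / R`.
The choice of `R` means `R = c / φ(u'(c)) = 4 / (a c² + 2b)`, so `r / R = r (a c² + 2b) / 4`,
which exceeds `T(r)` for `0 < r < c` because `a > 0`. Hence `u' < y'` on `(0, c)`,
and `y - u` vanishes at `0` and is strictly increasing on `[0, c]`.
-/

open Set Real

lemma strictMono_div_sqrt_one_add_sq : StrictMono fun s : ℝ => s / √(1 + s ^ 2) := by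
  simpa only [sin_arctan] using sin_arctan_strictMono

lemma div_sqrt_one_add_sq_lt_one (s : ℝ) : s / √(1 + s ^ 2) < 1 := by
  rw [div_lt_one (sqrt_pos.2 (by positivity))]
  exact lt_sqrt_of_sq_lt (by linarith)

lemma lt_mul_sqrt_one_add_sq_div {c p : ℝ} (hc : 0 < c) (hp : 0 < p) :
    c < c * √(1 + p ^ 2) / p := by
  have hφ : 0 < p / √(1 + p ^ 2) := div_pos hp (sqrt_pos.2 (by positivity))
  rw [← div_div_eq_mul_div, lt_div_iff₀ hφ]
  exact mul_lt_of_lt_one_right hc (div_sqrt_one_add_sq_lt_one p)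

lemma div_sqrt_one_add_sq_circle_slope {R r : ℝ} (hR : 0 < R) (hr : r ^ 2 < R ^ 2) :
    r / √(R ^ 2 - r ^ 2) / √(1 + (r / √(R ^ 2 - r ^ 2)) ^ 2) = r / R := by
  have hD : 0 < R ^ 2 - r ^ 2 := by linarith
  have hsqrt : √(1 + (r / √(R ^ 2 - r ^ 2)) ^ 2) = R / √(R ^ 2 - r ^ 2) := by
    rw [div_pow, sq_sqrt hD.le, one_add_div hD.ne', sub_add_cancel, sqrt_div' _ hD.le,
      sqrt_sq hR.le]
  rw [hsqrt, div_div_div_cancel_right₀ (sqrt_pos.2 hD).ne']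

lemma lt_circle_slope_of_div_sqrt_one_add_sq_lt {p R r : ℝ} (hR : 0 < R) (hr : r ^ 2 < R ^ 2)
    (h : p / √(1 + p ^ 2) < r / R) : p < r / √(R ^ 2 - r ^ 2) := by
  rwa [← strictMono_div_sqrt_one_add_sq.lt_iff_lt, div_sqrt_one_add_sq_circle_slope hR hr]

lemma hasDerivAt_const_sub_sqrt_sq_sub_sq (C : ℝ) {R r : ℝ} (hr : r ^ 2 < R ^ 2) :
    HasDerivAt (fun x => C - √(R ^ 2 - x ^ 2)) (r / √(R ^ 2 - r ^ 2)) r := by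
  have hD : R ^ 2 - r ^ 2 ≠ 0 := by linarith
  have hsub : HasDerivAt (fun x => R ^ 2 - x ^ 2) (-(2 * r)) r := by
    simpa using (hasDerivAt_pow 2 r).const_sub (R ^ 2)
  exact ((hsub.sqrt hD).const_sub C).congr_deriv (by ring)

lemma lt_of_hasDerivAt_lt_of_eq {f g f' g' : ℝ → ℝ} {a b : ℝ}
    (hfc : ContinuousOn f (Icc a b)) (hgc : ContinuousOn g (Icc a b))
    (hf : ∀ x ∈ Ioo a b, HasDerivAt f (f' x) x) (hg : ∀ x ∈ Ioo a b, HasDerivAt g (g' x) x)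
    (hlt : ∀ x ∈ Ioo a b, f' x < g' x) (ha : f a = g a) {x : ℝ} (hx : x ∈ Ioc a b) :
    f x < g x := by
  have hmono : StrictMonoOn (g - f) (Icc a b) := by
    refine strictMonoOn_of_hasDerivWithinAt_pos (convex_Icc a b) (hgc.sub hfc) (f' := g' - f')
      (fun y hy => ?_) (fun y hy => ?_) <;> rw [interior_Icc] at hy
    · exact ((hg y hy).sub (hf y hy)).hasDerivWithinAt
    · exact sub_pos.2 (hlt y hy)
  simpa [ha] using hmono (left_mem_Icc.2 (hx.1.le.trans hx.2)) (Ioc_subset_Icc_self hx) hx.1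

/-- Theorem (comparison with an upper circle): if `u` is an axisymmetric stationary
rotating profile on `[0,c]` with `u(0) = u₀`, `a > 0`, `b ≥ 0`, then `u'(c) > 0` and,
with `R = c√(1+u'(c)²)/u'(c)` and `y(r) = R + u₀ - √(R² - r²)`, one has `u(r) < y(r)`
for `0 < r ≤ c`. -/
theorem stmt_1 (a b c u₀ : ℝ) (ha : 0 < a) (hb : 0 ≤ b) (hc : 0 < c)
    (u u' : ℝ → ℝ)
    (hu : ∀ r ∈ Icc (0:ℝ) c, HasDerivAt u (u' r) r)
    (heq : ∀ r ∈ Icc (0:ℝ) c, u' r / Real.sqrt (1 + u' r ^ 2) = r * (a * r ^ 2 + 2 * b) / 4)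
    (h0 : u 0 = u₀) :
    0 < u' c ∧
      ∀ r, 0 < r → r ≤ c →
        u r < c * Real.sqrt (1 + u' c ^ 2) / u' c + u₀ -
          Real.sqrt ((c * Real.sqrt (1 + u' c ^ 2) / u' c) ^ 2 - r ^ 2) := by
  have hcc : c ∈ Icc 0 c := right_mem_Icc.2 hc.le
  have hslope : 0 < u' c := by
    rw [← div_pos_iff_of_pos_right (sqrt_pos.2 (by positivity : (0:ℝ) < 1 + u' c ^ 2)),
      heq c hcc]
    positivity
  refine ⟨hslope, fun r hr hrc => ?_⟩
  set R := c * √(1 + u' c ^ 2) / u' c with hRdef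
  have hcR : c < R := lt_mul_sqrt_one_add_sq_div hc hslope
  have hR : R = 4 / (a * c ^ 2 + 2 * b) := by
    rw [hRdef, ← div_div_eq_mul_div, heq c hcc]
    field_simp
  have hRpos : 0 < R := hc.trans hcR
  have hsq : ∀ x ∈ Icc 0 c, x ^ 2 < R ^ 2 := fun x hx =>
    pow_lt_pow_left₀ (hx.2.trans_lt hcR) hx.1 two_ne_zero
  have hcircle := fun x (hx : x ∈ Icc 0 c) =>
    hasDerivAt_const_sub_sqrt_sq_sub_sq (R + u₀) (hsq x hx)
  refine lt_of_hasDerivAt_lt_of_eq (fun x hx => (hu x hx).continuousAt.continuousWithinAt)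
    (fun x hx => (hcircle x hx).continuousAt.continuousWithinAt)
    (fun x hx => hu x (Ioo_subset_Icc_self hx))
    (fun x hx => hcircle x (Ioo_subset_Icc_self hx)) (fun x hx => ?_) ?_ ⟨hr, hrc⟩
  · have hxc := Ioo_subset_Icc_self hx
    refine lt_circle_slope_of_div_sqrt_one_add_sq_lt hRpos (hsq x hxc) ?_
    rw [heq x hxc, hR, div_div_eq_mul_div]
    nlinarith [mul_pos (mul_pos ha hx.1) (mul_pos (sub_pos.2 hx.2) (add_pos hx.1 hc))]
  · simp [h0, sqrt_sq hRpos.le]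
end

section
/- Let a > 0, b ≥ 0, and let c₀ be the unique positive root of x(a x² + 2b) = 4. Let u be an axisymmetric stationary rotating profile on [0, c₀), i.e. u is differentiable on [0, c₀) and u'(r)/√(1 + u'(r)²) = r(a r² + 2b)/4 for all r ∈ [0, c₀). Then 2π ∫₀^{c₀} r² u'(r) dr < (4/3) π c₀³. -/
open Set MeasureTheory

/-!
The Young–Laplace relation says that `φ(r) = r (a r² + 2b) / 4` is the sine of the inclination
angle of the profile, so `u' = φ / √(1 - φ²)`. The lower hemisphere of radius `c₀` has
inclination sine `r / c₀`, and since `c₀ (a c₀² + 2b) = 4` with `a > 0`, `φ(r) < r / c₀` on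
`(0, c₀)`. Hence `u'(r) < r / √(c₀² - r²)`, the slope of the hemisphere, and integrating
against `r²` gives a volume strictly below `2π ∫₀^{c₀} r³ / √(c₀² - r²) dr = (4/3) π c₀³`.
-/

theorem setIntegral_lt_setIntegral_of_forall_lt {X : Type*} [MeasurableSpace X] {μ : Measure X}
    {s : Set X} {f g : X → ℝ} (hs : MeasurableSet s) (hμs : μ s ≠ 0)
    (hf : IntegrableOn f s μ) (hg : IntegrableOn g s μ) (hlt : ∀ x ∈ s, f x < g x) :
    ∫ x in s, f x ∂μ < ∫ x in s, g x ∂μ := by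
  rw [← sub_pos, ← integral_sub hg hf,
    setIntegral_pos_iff_support_of_nonneg_ae (f := fun x => g x - f x) _ (hg.sub hf)]
  · have hsupp : Function.support (fun x => g x - f x) ∩ s = s :=
      inter_eq_right.2 fun x hx => (sub_pos.2 (hlt x hx)).ne'
    rw [hsupp]
    exact pos_iff_ne_zero.2 hμs
  · filter_upwards [ae_restrict_mem hs] with x hx
    exact (sub_pos.2 (hlt x hx)).le

theorem eq_div_sqrt_one_sub_sq_of_div_sqrt_one_add_sq_eq {y s : ℝ} (h : y / √(1 + y ^ 2) = s) :
    y = s / √(1 - s ^ 2) := by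
  have hpos : 0 < √(1 + y ^ 2) := Real.sqrt_pos.2 (by positivity)
  have hsq : 1 - s ^ 2 = (1 / √(1 + y ^ 2)) ^ 2 := by
    rw [← h, div_pow, div_pow, Real.sq_sqrt (by positivity)]
    field_simp
    ring
  rw [hsq, Real.sqrt_sq (by positivity), ← h]
  field_simp

theorem strictMonoOn_div_sqrt_one_sub_sq :
    StrictMonoOn (fun s : ℝ => s / √(1 - s ^ 2)) (Ico 0 1) := by
  rintro s ⟨hs0, -⟩ t ⟨-, ht1⟩ hst
  have ht : 0 < √(1 - t ^ 2) := Real.sqrt_pos.2 (by nlinarith)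
  calc s / √(1 - s ^ 2) ≤ s / √(1 - t ^ 2) := by gcongr
    _ < t / √(1 - t ^ 2) := by gcongr

theorem hasDerivAt_hemisphere_moment {c x : ℝ} (hx : x ^ 2 < c ^ 2) :
    HasDerivAt (fun r => -(r ^ 2 + 2 * c ^ 2) * √(c ^ 2 - r ^ 2) / 3)
      (x ^ 3 / √(c ^ 2 - x ^ 2)) x := by
  have hpos : 0 < c ^ 2 - x ^ 2 := sub_pos.2 hx
  have hs : 0 < √(c ^ 2 - x ^ 2) := Real.sqrt_pos.2 hpos
  have hsqrt := ((hasDerivAt_pow 2 x).const_sub (c ^ 2)).sqrt hpos.ne'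
  refine ((((hasDerivAt_pow 2 x).add_const (2 * c ^ 2)).neg.mul hsqrt).div_const 3).congr_deriv ?_
  simp only [Pi.neg_apply, Nat.cast_ofNat, Nat.add_one_sub_one, pow_one]
  field_simp
  rw [Real.sq_sqrt hpos.le]
  ring

theorem integrableOn_pow_three_div_sqrt_sq_sub_sq (c : ℝ) :
    IntegrableOn (fun r => r ^ 3 / √(c ^ 2 - r ^ 2)) (Ioc 0 c) :=
  intervalIntegral.integrableOn_deriv_of_nonneg (by fun_prop)
    (fun x hx => hasDerivAt_hemisphere_moment (by nlinarith [hx.1, hx.2]))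
    (fun x hx => div_nonneg (pow_nonneg hx.1.le 3) (Real.sqrt_nonneg _))

theorem integral_pow_three_div_sqrt_sq_sub_sq {c : ℝ} (hc : 0 ≤ c) :
    ∫ r in Ioo 0 c, r ^ 3 / √(c ^ 2 - r ^ 2) = 2 / 3 * c ^ 3 := by
  rw [← integral_Ioc_eq_integral_Ioo, ← intervalIntegral.integral_of_le hc,
    intervalIntegral.integral_eq_sub_of_hasDerivAt_of_le hc (by fun_prop)
      (fun x hx => hasDerivAt_hemisphere_moment (by nlinarith [hx.1, hx.2]))
      ((intervalIntegrable_iff_integrableOn_Ioc_of_le hc).2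
        (integrableOn_pow_three_div_sqrt_sq_sub_sq c))]
  rw [sub_self, Real.sqrt_zero, zero_pow two_ne_zero, sub_zero, Real.sqrt_sq hc]
  ring

theorem mul_sq_add_div_four_lt_div_of_root {a b c r : ℝ} (ha : 0 < a)
    (hroot : c * (a * c ^ 2 + 2 * b) = 4) (hr : r ∈ Ioo 0 c) :
    r * (a * r ^ 2 + 2 * b) / 4 < r / c := by
  obtain ⟨hr0, hrc⟩ := hr
  rw [div_lt_div_iff₀ four_pos (hr0.trans hrc)]
  have hsq : r ^ 2 < c ^ 2 := pow_lt_pow_left₀ hrc hr0.le two_ne_zero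
  nlinarith [mul_pos (mul_pos hr0 (hr0.trans hrc)) (mul_pos ha (sub_pos.2 hsq))]

theorem slope_nonneg_and_lt_hemisphere_slope {a b c r y : ℝ} (ha : 0 < a) (hb : 0 ≤ b)
    (hroot : c * (a * c ^ 2 + 2 * b) = 4) (hr : r ∈ Ioo 0 c)
    (hy : y / √(1 + y ^ 2) = r * (a * r ^ 2 + 2 * b) / 4) :
    0 ≤ y ∧ y < r / √(c ^ 2 - r ^ 2) := by
  have hc : 0 < c := hr.1.trans hr.2
  have hsin0 : 0 ≤ r * (a * r ^ 2 + 2 * b) / 4 := by have := hr.1; positivity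
  have hsin := mul_sq_add_div_four_lt_div_of_root ha hroot hr
  have hrc1 : r / c < 1 := (div_lt_one hc).2 hr.2
  rw [eq_div_sqrt_one_sub_sq_of_div_sqrt_one_add_sq_eq hy]
  refine ⟨div_nonneg hsin0 (Real.sqrt_nonneg _), ?_⟩
  have hsphere : r / c / √(1 - (r / c) ^ 2) = r / √(c ^ 2 - r ^ 2) := by
    rw [show 1 - (r / c) ^ 2 = (c ^ 2 - r ^ 2) / c ^ 2 by field_simp,
      Real.sqrt_div' _ (sq_nonneg c), Real.sqrt_sq hc.le]
    field_simp
  rw [← hsphere]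
  exact strictMonoOn_div_sqrt_one_sub_sq ⟨hsin0, hsin.trans hrc1⟩
    ⟨div_nonneg hr.1.le hc.le, hrc1⟩ hsin

/-- Corollary (volume bound): the enclosed volume `2π ∫₀^{c₀} r² u'(r) dr` of the
lower half of an axisymmetric rotating closed drop of type I is finite and less than
`(4/3)π c₀³`. -/
theorem stmt_5 (a b c₀ : ℝ) (ha : 0 < a) (hb : 0 ≤ b)
    (hc₀ : 0 < c₀) (hroot : c₀ * (a * c₀ ^ 2 + 2 * b) = 4)
    (u u' : ℝ → ℝ)
    (hu : ∀ r ∈ Ico (0:ℝ) c₀, HasDerivAt u (u' r) r)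
    (heq : ∀ r ∈ Ico (0:ℝ) c₀, u' r / Real.sqrt (1 + u' r ^ 2) = r * (a * r ^ 2 + 2 * b) / 4) :
    IntegrableOn (fun r => r ^ 2 * u' r) (Ioo 0 c₀) ∧
      2 * Real.pi * ∫ r in Ioo (0:ℝ) c₀, r ^ 2 * u' r < 4 / 3 * Real.pi * c₀ ^ 3 := by
  have hslope (r : ℝ) (hr : r ∈ Ioo 0 c₀) : 0 ≤ u' r ∧ u' r < r / √(c₀ ^ 2 - r ^ 2) :=
    slope_nonneg_and_lt_hemisphere_slope ha hb hroot hr (heq r (Ioo_subset_Ico_self hr))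
  have hlt (r : ℝ) (hr : r ∈ Ioo 0 c₀) : r ^ 2 * u' r < r ^ 3 / √(c₀ ^ 2 - r ^ 2) := by
    calc r ^ 2 * u' r < r ^ 2 * (r / √(c₀ ^ 2 - r ^ 2)) :=
          mul_lt_mul_of_pos_left (hslope r hr).2 (pow_pos hr.1 2)
      _ = r ^ 3 / √(c₀ ^ 2 - r ^ 2) := by ring
  have hsphere := (integrableOn_pow_three_div_sqrt_sq_sub_sq c₀).mono_set Ioo_subset_Ioc_self
  -- `u'` agrees with the measurable function `deriv u` on `(0, c₀)`.
  have hmeas : AEStronglyMeasurable (fun r => r ^ 2 * u' r) (volume.restrict (Ioo 0 c₀)) := by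
    have hderiv := measurable_deriv u
    refine (Measurable.aestronglyMeasurable
      (f := fun r => r ^ 2 * deriv u r) (by fun_prop)).congr ?_
    filter_upwards [ae_restrict_mem measurableSet_Ioo] with r hr
    rw [(hu r (Ioo_subset_Ico_self hr)).deriv]
  have hint : IntegrableOn (fun r => r ^ 2 * u' r) (Ioo 0 c₀) := by
    refine hsphere.mono' hmeas ?_
    filter_upwards [ae_restrict_mem measurableSet_Ioo] with r hr
    rw [Real.norm_eq_abs, abs_of_nonneg (by have := (hslope r hr).1; positivity)]
    exact (hlt r hr).le
  refine ⟨hint, ?_⟩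
  have hvol := setIntegral_lt_setIntegral_of_forall_lt measurableSet_Ioo
    (by simp [hc₀]) hint hsphere hlt
  rw [integral_pow_three_div_sqrt_sq_sub_sq hc₀.le] at hvol
  nlinarith [Real.pi_pos]
end

section
/- Let a > 0, b > 0, c > 0, u₀ ∈ ℝ, and let u be an axisymmetric stationary rotating profile on [0, c] with u(0) = u₀, i.e. u is differentiable on [0, c] and u'(r)/√(1 + u'(r)²) = r(a r² + 2b)/4 for all r ∈ [0, c]. Let A(c) = 2π ∫₀^c r √(1 + u'(r)²) dr denote the area of the corresponding surface of revolution. Then (4π/b²)(2 − √(4 − b² c²)) < A(c) < 8π (4 − √(16 − c²(a c² + 2b)²)) / (a c² + 2b)². -/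
/-!
The first integral says that `f r = r (a r² + 2b) / 4` is the sine of the inclination of the
profile, so `√(1 + u'²) = 1 / √(1 - f²)` and the area is `2π ∫₀^c r / √(1 - f(r)²) dr`.
On `(0, c)` the cubic `f` lies strictly between the linear functions `(b/2) r` and
`((a c² + 2b)/4) r`, for which the integral is explicit:
`∫₀^c r / √(1 - m² r²) dr = (1 - √(1 - m² c²)) / m²`.
Since `t ↦ r / √(1 - t²)` is increasing on `[0, 1)`, the two bounds follow.
-/

open Set intervalIntegral MeasureTheory Real

lemma sq_div_sqrt_one_add_sq_lt_one (s : ℝ) : (s / √(1 + s ^ 2)) ^ 2 < 1 := by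
  rw [div_pow, Real.sq_sqrt (by positivity), div_lt_one (by positivity)]
  linarith

lemma sqrt_one_add_sq_eq_inv_sqrt (s : ℝ) :
    √(1 + s ^ 2) = (√(1 - (s / √(1 + s ^ 2)) ^ 2))⁻¹ := by
  have h : 1 - (s / √(1 + s ^ 2)) ^ 2 = (1 + s ^ 2)⁻¹ := by
    rw [div_pow, Real.sq_sqrt (by positivity)]
    field_simp
    ring
  rw [h, Real.sqrt_inv, inv_inv]

lemma sqrt_sq_mul {k : ℝ} (hk : 0 ≤ k) (x : ℝ) : √(k ^ 2 * x) = k * √x := by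
  rw [Real.sqrt_mul (sq_nonneg k), Real.sqrt_sq hk]

lemma div_sqrt_one_sub_sq_lt_div_sqrt_one_sub_sq {r s t : ℝ} (hr : 0 < r) (hs : 0 ≤ s)
    (hst : s < t) (ht : t < 1) : r / √(1 - s ^ 2) < r / √(1 - t ^ 2) := by
  have ht' : 0 < 1 - t ^ 2 := by nlinarith
  exact div_lt_div_of_pos_left hr (Real.sqrt_pos.2 ht') (Real.sqrt_lt_sqrt ht'.le (by nlinarith))

lemma continuousOn_div_sqrt_one_sub_sq {φ : ℝ → ℝ} {s : Set ℝ} (hφ : ContinuousOn φ s)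
    (h1 : ∀ r ∈ s, φ r ^ 2 < 1) : ContinuousOn (fun r ↦ r / √(1 - φ r ^ 2)) s :=
  continuousOn_id.div (continuousOn_const.sub (hφ.pow 2)).sqrt
    fun r hr ↦ (Real.sqrt_pos.2 (sub_pos.2 (h1 r hr))).ne'

lemma integral_div_sqrt_one_sub_mul_sq {m c : ℝ} (hm : m ≠ 0) (hmc : (m * c) ^ 2 < 1) :
    ∫ r in (0 : ℝ)..c, r / √(1 - (m * r) ^ 2) = (1 - √(1 - (m * c) ^ 2)) / m ^ 2 := by
  have hpos : ∀ r ∈ uIcc 0 c, 0 < 1 - (m * r) ^ 2 := by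
    intro r hr
    have : r ^ 2 ≤ c ^ 2 := by
      rcases mem_uIcc.1 hr with ⟨h0, hc⟩ | ⟨hc, h0⟩ <;> nlinarith
    nlinarith [sq_nonneg m]
  have hderiv : ∀ r ∈ uIcc 0 c,
      HasDerivAt (fun x ↦ -√(1 - (m * x) ^ 2) / m ^ 2) (r / √(1 - (m * r) ^ 2)) r := by
    intro r hr
    have hinner : HasDerivAt (fun x ↦ 1 - (m * x) ^ 2) (-(2 * m ^ 2 * r)) r := by
      simpa [mul_pow] using ((hasDerivAt_pow 2 r).const_mul (m ^ 2)).const_sub 1 |>.congr_deriv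
        (by ring)
    refine ((hinner.sqrt (hpos r hr).ne').neg.div_const (m ^ 2)).congr_deriv ?_
    have hs : √(1 - (m * r) ^ 2) ≠ 0 := (Real.sqrt_pos.2 (hpos r hr)).ne'
    field_simp
  rw [integral_eq_sub_of_hasDerivAt hderiv
    ((continuousOn_div_sqrt_one_sub_sq (continuousOn_const.mul continuousOn_id)
      fun r hr ↦ sub_pos.1 (hpos r hr)).intervalIntegrable)]
  simp only [mul_zero, zero_pow two_ne_zero, sub_zero, Real.sqrt_one]
  ring

lemma integral_div_sqrt_one_sub_sq_lt {c : ℝ} (hc : 0 < c) {φ ψ : ℝ → ℝ}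
    (hφ : ContinuousOn φ (Icc 0 c)) (hψ : ContinuousOn ψ (Icc 0 c))
    (hφ0 : ∀ r ∈ Icc 0 c, 0 ≤ φ r) (hle : ∀ r ∈ Icc 0 c, φ r ≤ ψ r)
    (hψ1 : ∀ r ∈ Icc 0 c, ψ r < 1) (hlt : ∀ r ∈ Ioo 0 c, φ r < ψ r) :
    ∫ r in (0 : ℝ)..c, r / √(1 - φ r ^ 2) < ∫ r in (0 : ℝ)..c, r / √(1 - ψ r ^ 2) := by
  have hint : ∀ χ : ℝ → ℝ, ContinuousOn χ (Icc 0 c) →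
      (∀ r ∈ Icc 0 c, 0 ≤ χ r ∧ χ r < 1) →
      IntervalIntegrable (fun r ↦ r / √(1 - χ r ^ 2)) volume 0 c := fun χ hχ hχ1 ↦
    (continuousOn_div_sqrt_one_sub_sq hχ fun r hr ↦ by
      nlinarith [hχ1 r hr]).intervalIntegrable_of_Icc hc.le
  have hφi := hint φ hφ fun r hr ↦ ⟨hφ0 r hr, (hle r hr).trans_lt (hψ1 r hr)⟩
  have hψi := hint ψ hψ fun r hr ↦ ⟨(hφ0 r hr).trans (hle r hr), hψ1 r hr⟩
  rw [← sub_pos, ← integral_sub hψi hφi]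
  refine intervalIntegral_pos_of_pos_on (hψi.sub hφi) (fun r hr ↦ sub_pos.2 ?_) hc
  exact div_sqrt_one_sub_sq_lt_div_sqrt_one_sub_sq hr.1 (hφ0 r (Ioo_subset_Icc_self hr))
    (hlt r hr) (hψ1 r (Ioo_subset_Icc_self hr))

noncomputable def sinInclination (a b r : ℝ) : ℝ := r * (a * r ^ 2 + 2 * b) / 4

section sinInclination

variable {a b c r : ℝ}

lemma continuous_sinInclination : Continuous (sinInclination a b) := by
  unfold sinInclination
  fun_prop

lemma sinInclination_eq_mul (a b c : ℝ) :
    sinInclination a b c = (a * c ^ 2 + 2 * b) / 4 * c := by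
  unfold sinInclination
  ring

lemma sinInclination_sub_mul (a b r : ℝ) : sinInclination a b r - b / 2 * r = a * r ^ 3 / 4 := by
  unfold sinInclination
  ring

lemma mul_sub_sinInclination (a b c r : ℝ) :
    (a * c ^ 2 + 2 * b) / 4 * r - sinInclination a b r = a * r * (c + r) * (c - r) / 4 := by
  unfold sinInclination
  ring

lemma mul_le_sinInclination (ha : 0 ≤ a) (hr : 0 ≤ r) : b / 2 * r ≤ sinInclination a b r := by
  linarith [sinInclination_sub_mul a b r, show 0 ≤ a * r ^ 3 / 4 by positivity]

lemma mul_lt_sinInclination (ha : 0 < a) (hr : 0 < r) : b / 2 * r < sinInclination a b r := by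
  linarith [sinInclination_sub_mul a b r, show 0 < a * r ^ 3 / 4 by positivity]

lemma sinInclination_le_mul (ha : 0 ≤ a) (hr : r ∈ Icc 0 c) :
    sinInclination a b r ≤ (a * c ^ 2 + 2 * b) / 4 * r := by
  have : 0 ≤ a * r * (c + r) * (c - r) / 4 := by
    have := hr.1; have := sub_nonneg.2 hr.2; have : 0 ≤ c + r := by linarith
    positivity
  linarith [mul_sub_sinInclination a b c r]

lemma sinInclination_lt_mul (ha : 0 < a) (hr : r ∈ Ioo 0 c) :
    sinInclination a b r < (a * c ^ 2 + 2 * b) / 4 * r := by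
  have : 0 < a * r * (c + r) * (c - r) / 4 := by
    have := hr.1; have := sub_pos.2 hr.2; have : 0 < c + r := by linarith
    positivity
  linarith [mul_sub_sinInclination a b c r]

lemma mul_lt_one_of_sinInclination_lt_one (ha : 0 ≤ a) (hb : 0 ≤ b)
    (hc1 : sinInclination a b c < 1) (hr : r ∈ Icc 0 c) : (a * c ^ 2 + 2 * b) / 4 * r < 1 :=
  calc (a * c ^ 2 + 2 * b) / 4 * r ≤ (a * c ^ 2 + 2 * b) / 4 * c := by gcongr; exact hr.2
    _ = sinInclination a b c := (sinInclination_eq_mul a b c).symm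
    _ < 1 := hc1

lemma lt_integral_div_sqrt_one_sub_sinInclination_sq (ha : 0 < a) (hb : 0 < b) (hc : 0 < c)
    (hc1 : sinInclination a b c < 1) :
    (1 - √(1 - (b / 2 * c) ^ 2)) / (b / 2) ^ 2 <
      ∫ r in (0 : ℝ)..c, r / √(1 - sinInclination a b r ^ 2) := by
  have hsin1 : ∀ r ∈ Icc 0 c, sinInclination a b r < 1 := fun r hr ↦
    (sinInclination_le_mul ha.le hr).trans_lt
      (mul_lt_one_of_sinInclination_lt_one ha.le hb.le hc1 hr)
  have hbc : 0 ≤ b / 2 * c := by positivity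
  rw [← integral_div_sqrt_one_sub_mul_sq (by positivity)
    (pow_lt_one₀ hbc ((mul_lt_sinInclination ha hc).trans hc1) two_ne_zero)]
  exact integral_div_sqrt_one_sub_sq_lt hc (by fun_prop) continuous_sinInclination.continuousOn
    (fun r hr ↦ by have := hr.1; positivity) (fun r hr ↦ mul_le_sinInclination ha.le hr.1) hsin1
    (fun r hr ↦ mul_lt_sinInclination ha hr.1)

lemma integral_div_sqrt_one_sub_sinInclination_sq_lt (ha : 0 < a) (hb : 0 < b) (hc : 0 < c)
    (hc1 : sinInclination a b c < 1) :
    ∫ r in (0 : ℝ)..c, r / √(1 - sinInclination a b r ^ 2) <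
      (1 - √(1 - ((a * c ^ 2 + 2 * b) / 4 * c) ^ 2)) / ((a * c ^ 2 + 2 * b) / 4) ^ 2 := by
  have hKc1 : (a * c ^ 2 + 2 * b) / 4 * c < 1 := sinInclination_eq_mul a b c ▸ hc1
  rw [← integral_div_sqrt_one_sub_mul_sq (by positivity)
    (pow_lt_one₀ (by positivity) hKc1 two_ne_zero)]
  exact integral_div_sqrt_one_sub_sq_lt hc continuous_sinInclination.continuousOn (by fun_prop)
    (fun r hr ↦ (by have := hr.1; positivity : 0 ≤ b / 2 * r).trans
      (mul_le_sinInclination ha.le hr.1))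
    (fun r hr ↦ sinInclination_le_mul ha.le hr)
    (fun r hr ↦ mul_lt_one_of_sinInclination_lt_one ha.le hb.le hc1 hr)
    (fun r hr ↦ sinInclination_lt_mul ha hr)

end sinInclination

lemma integral_mul_sqrt_one_add_sq_eq {c : ℝ} (hc : 0 ≤ c) {u' f : ℝ → ℝ}
    (h : ∀ r ∈ Icc 0 c, u' r / √(1 + u' r ^ 2) = f r) :
    ∫ r in (0 : ℝ)..c, r * √(1 + u' r ^ 2) = ∫ r in (0 : ℝ)..c, r / √(1 - f r ^ 2) :=
  integral_congr fun r hr ↦ by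
    rw [uIcc_of_le hc] at hr
    rw [sqrt_one_add_sq_eq_inv_sqrt, h r hr, div_eq_mul_inv]

theorem stmt_7_general (a b c : ℝ) (ha : 0 < a) (hb : 0 < b) (hc : 0 < c)
    (u' : ℝ → ℝ)
    (heq : ∀ r ∈ Icc (0:ℝ) c, u' r / Real.sqrt (1 + u' r ^ 2) = r * (a * r ^ 2 + 2 * b) / 4) :
    4 * Real.pi / b ^ 2 * (2 - Real.sqrt (4 - b ^ 2 * c ^ 2)) <
        2 * Real.pi * ∫ r in (0:ℝ)..c, r * Real.sqrt (1 + u' r ^ 2) ∧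
      2 * Real.pi * ∫ r in (0:ℝ)..c, r * Real.sqrt (1 + u' r ^ 2) <
        8 * Real.pi * (4 - Real.sqrt (16 - c ^ 2 * (a * c ^ 2 + 2 * b) ^ 2)) /
          (a * c ^ 2 + 2 * b) ^ 2 := by
  have hsin : ∀ r ∈ Icc 0 c, u' r / √(1 + u' r ^ 2) = sinInclination a b r := heq
  have hc1 : sinInclination a b c < 1 := by
    have h := sq_div_sqrt_one_add_sq_lt_one (u' c)
    rw [hsin c ⟨hc.le, le_rfl⟩] at h
    nlinarith
  have hlow := lt_integral_div_sqrt_one_sub_sinInclination_sq ha hb hc hc1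
  have hhigh := integral_div_sqrt_one_sub_sinInclination_sq_lt ha hb hc hc1
  rw [integral_mul_sqrt_one_add_sq_eq hc.le hsin]
  set K := a * c ^ 2 + 2 * b
  constructor
  · calc 4 * π / b ^ 2 * (2 - √(4 - b ^ 2 * c ^ 2))
        = 2 * π * ((1 - √(1 - (b / 2 * c) ^ 2)) / (b / 2) ^ 2) := by
          rw [show 4 - b ^ 2 * c ^ 2 = 2 ^ 2 * (1 - (b / 2 * c) ^ 2) by ring,
            sqrt_sq_mul two_pos.le]
          field_simp
          ring
      _ < _ := by gcongr
  · calc _ < 2 * π * ((1 - √(1 - (K / 4 * c) ^ 2)) / (K / 4) ^ 2) := by gcongr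
      _ = 8 * π * (4 - √(16 - c ^ 2 * K ^ 2)) / K ^ 2 := by
          rw [show 16 - c ^ 2 * K ^ 2 = 4 ^ 2 * (1 - (K / 4 * c) ^ 2) by ring,
            sqrt_sq_mul four_pos.le]
          have : 0 < K := by positivity
          field_simp
          ring

/-- Theorem (area estimates): for an axisymmetric profile of type I on `[0,c]` with
`a > 0`, `b > 0`, the area `A(c) = 2π ∫₀^c r√(1+u'(r)²) dr` satisfies
`(4π/b²)(2 - √(4 - b²c²)) < A(c) < 8π(4 - √(16 - c²(ac²+2b)²))/(ac²+2b)²`. -/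
theorem stmt_7 (a b c u₀ : ℝ) (ha : 0 < a) (hb : 0 < b) (hc : 0 < c)
    (u u' : ℝ → ℝ)
    (hu : ∀ r ∈ Icc (0:ℝ) c, HasDerivAt u (u' r) r)
    (heq : ∀ r ∈ Icc (0:ℝ) c, u' r / Real.sqrt (1 + u' r ^ 2) = r * (a * r ^ 2 + 2 * b) / 4)
    (h0 : u 0 = u₀) :
    4 * Real.pi / b ^ 2 * (2 - Real.sqrt (4 - b ^ 2 * c ^ 2)) <
        2 * Real.pi * ∫ r in (0:ℝ)..c, r * Real.sqrt (1 + u' r ^ 2) ∧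
      2 * Real.pi * ∫ r in (0:ℝ)..c, r * Real.sqrt (1 + u' r ^ 2) <
        8 * Real.pi * (4 - Real.sqrt (16 - c ^ 2 * (a * c ^ 2 + 2 * b) ^ 2)) /
          (a * c ^ 2 + 2 * b) ^ 2 :=
  stmt_7_general a b c ha hb hc u' heq
end

section
/- Let a > 0, b ≥ 0, and let c₀ be the unique positive root of x(a x² + 2b) = 4. Let u be an axisymmetric stationary rotating profile on [0, c₀), i.e. u is twice differentiable on [0, c₀) and u'(r)/√(1 + u'(r)²) = r(a r² + 2b)/4 for all r ∈ [0, c₀). Then u'(r) > 0 for all r ∈ (0, c₀) (so u is strictly increasing on [0, c₀)), and u''(r) > 0 for all r ∈ [0, c₀) with 3 a r² + 2b > 0; in particular if b > 0 then u is strictly convex on [0, c₀). -/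
open Set Real

/-! The equation reads `sin (arctan u') = r (a r² + 2b) / 4`. Positivity of the right-hand side
on `(0, c₀)` gives `u' > 0`; differentiating it, and using that `y ↦ sin (arctan y)` has positive
derivative, shows that `u''` has the sign of `(3 a r² + 2b) / 4`. When `b > 0` this makes `u'`
strictly increasing, hence `u` strictly convex. -/

theorem strictMonoOn_of_hasDerivAt_pos {D : Set ℝ} (hD : Convex ℝ D) {f f' : ℝ → ℝ}
    (hf : ∀ x ∈ D, HasDerivAt f (f' x) x) (hf'₀ : ∀ x ∈ interior D, 0 < f' x) :
    StrictMonoOn f D :=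
  strictMonoOn_of_hasDerivWithinAt_pos hD
    (fun x hx => (hf x hx).continuousAt.continuousWithinAt)
    (fun x hx => (hf x (interior_subset hx)).hasDerivWithinAt) hf'₀

theorem strictConvexOn_of_hasDerivAt_of_strictMonoOn {D : Set ℝ} (hD : Convex ℝ D)
    {f f' : ℝ → ℝ} (hf : ∀ x ∈ D, HasDerivAt f (f' x) x) (hf' : StrictMonoOn f' D) :
    StrictConvexOn ℝ D f := by
  have hderiv : EqOn f' (deriv f) (interior D) := fun x hx =>
    (hf x (interior_subset hx)).deriv.symm
  exact ((hf'.mono interior_subset).congr hderiv).strictConvexOn_of_deriv hD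
    fun x hx => (hf x hx).continuousAt.continuousWithinAt

theorem pos_iff_of_hasDerivAt_of_eqOn_sin_arctan {s : Set ℝ} {f g : ℝ → ℝ} {f' g' r : ℝ}
    (hs : UniqueDiffWithinAt ℝ s r) (hr : r ∈ s) (hf : HasDerivAt f f' r)
    (hg : HasDerivWithinAt g g' s r) (hfg : EqOn (fun x => sin (arctan (f x))) g s) :
    0 < f' ↔ 0 < g' := by
  have hcomp : HasDerivWithinAt g (cos (arctan (f r)) * ((1 + f r ^ 2)⁻¹ * f')) s r :=
    ((hasDerivAt_sin _).comp r ((hasDerivAt_arctan' _).comp r hf)).hasDerivWithinAt.congr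
      (fun x hx => (hfg hx).symm) (hfg hr).symm
  have hfactor : 0 < cos (arctan (f r)) * (1 + f r ^ 2)⁻¹ :=
    mul_pos (cos_arctan_pos _) (by positivity)
  rw [hs.eq_deriv s hg hcomp, ← mul_assoc]
  exact (mul_pos_iff_of_pos_left hfactor).symm

theorem hasDerivAt_mul_quadratic_div_four (a b r : ℝ) :
    HasDerivAt (fun x => x * (a * x ^ 2 + 2 * b) / 4) ((3 * a * r ^ 2 + 2 * b) / 4) r := by
  refine (((hasDerivAt_id' r).mul (((hasDerivAt_pow 2 r).const_mul a).add_const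
    (2 * b))).div_const 4).congr_deriv ?_
  norm_num
  ring

theorem stmt_10_general (a b c₀ : ℝ) (ha : 0 < a) (hb : 0 ≤ b)
    (u u' u'' : ℝ → ℝ)
    (hu : ∀ r ∈ Ico (0:ℝ) c₀, HasDerivAt u (u' r) r)
    (hu' : ∀ r ∈ Ico (0:ℝ) c₀, HasDerivAt u' (u'' r) r)
    (heq : ∀ r ∈ Ico (0:ℝ) c₀, u' r / Real.sqrt (1 + u' r ^ 2) = r * (a * r ^ 2 + 2 * b) / 4) :
    (∀ r, 0 < r → r < c₀ → 0 < u' r) ∧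
      StrictMonoOn u (Ico (0:ℝ) c₀) ∧
      (∀ r ∈ Ico (0:ℝ) c₀, 0 < 3 * a * r ^ 2 + 2 * b → 0 < u'' r) ∧
      (0 < b → StrictConvexOn ℝ (Ico (0:ℝ) c₀) u) := by
  have hsin : EqOn (fun r => sin (arctan (u' r))) (fun r => r * (a * r ^ 2 + 2 * b) / 4)
      (Ico 0 c₀) := fun r hr => (sin_arctan _).trans (heq r hr)
  have hu'_pos : ∀ r, 0 < r → r < c₀ → 0 < u' r := fun r hr hrc =>
    sin_arctan_pos.1 (by rw [sin_arctan, heq r ⟨hr.le, hrc⟩]; positivity)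
  have hu''_pos : ∀ r ∈ Ico (0:ℝ) c₀, 0 < 3 * a * r ^ 2 + 2 * b → 0 < u'' r := fun r hr hr' =>
    (pos_iff_of_hasDerivAt_of_eqOn_sin_arctan (uniqueDiffOn_Ico 0 c₀ r hr) hr (hu' r hr)
      (hasDerivAt_mul_quadratic_div_four a b r).hasDerivWithinAt hsin).2 (by positivity)
  refine ⟨hu'_pos, strictMonoOn_of_hasDerivAt_pos (convex_Ico 0 c₀) hu ?_, hu''_pos,
    fun hb₀ => ?_⟩
  · rw [interior_Ico]
    exact fun r hr => hu'_pos r hr.1 hr.2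
  · refine strictConvexOn_of_hasDerivAt_of_strictMonoOn (convex_Ico 0 c₀) hu
      (strictMonoOn_of_hasDerivAt_pos (convex_Ico 0 c₀) hu' fun r hr => ?_)
    exact hu''_pos r (interior_subset hr) (by positivity)

/-- Surfaces of type I: the profile `u` is strictly increasing (`u' > 0` on `(0, c₀)`)
and convex (`u'' > 0` wherever `3ar² + 2b > 0`); in particular strictly convex when
`b > 0`. -/
theorem stmt_10 (a b c₀ : ℝ) (ha : 0 < a) (hb : 0 ≤ b)
    (hc₀ : 0 < c₀) (hroot : c₀ * (a * c₀ ^ 2 + 2 * b) = 4)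
    (u u' u'' : ℝ → ℝ)
    (hu : ∀ r ∈ Ico (0:ℝ) c₀, HasDerivAt u (u' r) r)
    (hu' : ∀ r ∈ Ico (0:ℝ) c₀, HasDerivAt u' (u'' r) r)
    (heq : ∀ r ∈ Ico (0:ℝ) c₀, u' r / Real.sqrt (1 + u' r ^ 2) = r * (a * r ^ 2 + 2 * b) / 4) :
    (∀ r, 0 < r → r < c₀ → 0 < u' r) ∧
      StrictMonoOn u (Ico (0:ℝ) c₀) ∧
      (∀ r ∈ Ico (0:ℝ) c₀, 0 < 3 * a * r ^ 2 + 2 * b → 0 < u'' r) ∧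
      (0 < b → StrictConvexOn ℝ (Ico (0:ℝ) c₀) u) :=
  stmt_10_general a b c₀ ha hb u u' u'' hu hu' heq
end

section
/- Let a > 0, b ≥ 0, set f(r) = r(a r² + 2b)/4, and let c₀ be the unique positive root of f(x) = 1. Then the function r ↦ f(r)/√(1 − f(r)²) is integrable on [0, c₀), i.e. the improper integral ∫₀^{c₀} f(r)/√(1 − f(r)²) dr is finite. -/
open Set MeasureTheory

/-- With `f(r) = r(ar²+2b)/4`, `a > 0`, `b ≥ 0` and `c₀` the positive root of
`f(x) = 1`, the improper integral `∫₀^{c₀} f/√(1-f²)` is finite, i.e. `f/√(1-f²)`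
is integrable on `[0, c₀)`. -/
theorem stmt_13 (a b c₀ : ℝ) (ha : 0 < a) (hb : 0 ≤ b)
    (hc₀ : 0 < c₀) (hroot : c₀ * (a * c₀ ^ 2 + 2 * b) / 4 = 1) :
    IntegrableOn
      (fun r => (r * (a * r ^ 2 + 2 * b) / 4) /
        Real.sqrt (1 - (r * (a * r ^ 2 + 2 * b) / 4) ^ 2))
      (Ico (0:ℝ) c₀) := by
  set K : ℝ := a * c₀ ^ 2 / 4 with hK
  have hKpos : 0 < K := by positivity
  -- the dominating function
  have h1 : IntervalIntegrable (fun x : ℝ => x ^ (-(1/2) : ℝ)) volume 0 c₀ :=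
    intervalIntegral.intervalIntegrable_rpow' (by norm_num)
  have h2 : IntervalIntegrable (fun x : ℝ => (c₀ - x) ^ (-(1/2) : ℝ)) volume 0 c₀ := by
    have := (h1.comp_sub_left c₀).symm
    simpa using this
  have hg : IntegrableOn (fun x : ℝ => (Real.sqrt K)⁻¹ * (c₀ - x) ^ (-(1/2) : ℝ))
      (Ico (0:ℝ) c₀) := by
    have h3 : IntegrableOn (fun x : ℝ => (Real.sqrt K)⁻¹ * (c₀ - x) ^ (-(1/2) : ℝ))
        (Ioc (0:ℝ) c₀) :=
      ((intervalIntegrable_iff_integrableOn_Ioc_of_le hc₀.le).mp h2).const_mul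
        (Real.sqrt K)⁻¹
    rw [integrableOn_Ico_iff_integrableOn_Ioo]
    exact h3.mono_set Ioo_subset_Ioc_self
  refine Integrable.mono' hg ?_ ?_
  · have m1 : Measurable fun r : ℝ => r * (a * r ^ 2 + 2 * b) / 4 := by fun_prop
    have m2 : Measurable fun r : ℝ => Real.sqrt (1 - (r * (a * r ^ 2 + 2 * b) / 4) ^ 2) := by
      fun_prop
    exact (m1.div m2).aestronglyMeasurable
  · rw [ae_restrict_iff' measurableSet_Ico]
    filter_upwards with x hx
    obtain ⟨hx0, hxc⟩ := hx
    set F : ℝ := x * (a * x ^ 2 + 2 * b) / 4 with hF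
    have hF0 : 0 ≤ F := by positivity
    have hkey : K * (c₀ - x) ≤ 1 - F := by
      have hcx : (0:ℝ) ≤ c₀ - x := by linarith
      rw [hF, ← hroot, hK]
      nlinarith [mul_nonneg (mul_nonneg (mul_nonneg ha.le hx0) hcx)
        (by linarith : (0:ℝ) ≤ c₀ + x), mul_nonneg hb hcx]
    have hKc : 0 < K * (c₀ - x) := by
      have : 0 < c₀ - x := by linarith
      positivity
    have hF1 : F ≤ 1 := by nlinarith
    have hsq : K * (c₀ - x) ≤ 1 - F ^ 2 := by nlinarith
    have hsqrt : Real.sqrt K * Real.sqrt (c₀ - x) ≤ Real.sqrt (1 - F ^ 2) := by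
      rw [← Real.sqrt_mul hKpos.le]
      exact Real.sqrt_le_sqrt hsq
    have hpos : 0 < Real.sqrt K * Real.sqrt (c₀ - x) := by
      apply mul_pos (Real.sqrt_pos.mpr hKpos) (Real.sqrt_pos.mpr (by linarith))
    have hnorm : ‖F / Real.sqrt (1 - F ^ 2)‖ = F / Real.sqrt (1 - F ^ 2) := by
      rw [Real.norm_eq_abs, abs_of_nonneg]
      exact div_nonneg hF0 (Real.sqrt_nonneg _)
    rw [hnorm]
    have hb1 : F / Real.sqrt (1 - F ^ 2) ≤ 1 / (Real.sqrt K * Real.sqrt (c₀ - x)) :=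
      div_le_div₀ zero_le_one hF1 hpos hsqrt
    refine hb1.trans (le_of_eq ?_)
    rw [Real.rpow_neg (by linarith), one_div, mul_inv]
    congr 1
    rw [← Real.sqrt_eq_rpow]
end
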